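/- arXiv:1912.04951 — 10 statements merged into one kernel-verified Lean document; each statement's English description precedes it below -/
import Mathlib

section
/- If p is a real polynomial all of whose zeroes are real, then for every real x, p(x)·p''(x) − (p'(x))² ≤ 0. -/
open Polynomial

private lemma laguerre_aux : ∀ n : ℕ, ∀ p : ℝ[X], p.natDegree ≤ n →
    (∀ z : ℂ, (p.map (algebraMap ℝ ℂ)).IsRoot z → z.im = 0) →
    ∀ x : ℝ,
      p.eval x * (derivative (derivative p)).eval x - ((derivative p).eval x) ^ 2 ≤ 0 := by
  intro n
  induction n with
  | zero =>
    intro p hdeg _ x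
    rw [Polynomial.eq_C_of_natDegree_le_zero hdeg]
    simp
  | succ n ih =>
    intro p hdeg hreal x
    by_cases hp0 : p = 0
    · simp [hp0]
    by_cases hle : p.natDegree ≤ n
    · exact ih p hle hreal x
    have hdeg' : p.natDegree = n + 1 := le_antisymm hdeg (not_le.mp hle)
    -- the map of p to ℂ has a root
    have hmapne : p.map (algebraMap ℝ ℂ) ≠ 0 := by
      simpa using (Polynomial.map_ne_zero_iff (algebraMap ℝ ℂ).injective).mpr hp0
    have hdegpos : 0 < (p.map (algebraMap ℝ ℂ)).degree := by
      rw [Polynomial.degree_map_eq_of_injective (algebraMap ℝ ℂ).injective]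
      rw [Polynomial.degree_eq_natDegree hp0, hdeg']
      exact_mod_cast Nat.succ_pos n
    obtain ⟨z, hz⟩ := Complex.exists_root hdegpos
    have him : z.im = 0 := hreal z hz
    set r : ℝ := z.re with hr
    have hzr : (r : ℂ) = z := by
      apply Complex.ext <;> simp [hr, him]
    have hroot : p.IsRoot r := by
      have h2 : eval (r : ℂ) (p.map (algebraMap ℝ ℂ)) = 0 := by rw [hzr]; exact hz
      rw [← Complex.coe_algebraMap, Polynomial.eval_map, Polynomial.eval₂_at_apply] at h2
      rw [Complex.coe_algebraMap] at h2
      exact_mod_cast h2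
    obtain ⟨q, hq⟩ := (Polynomial.dvd_iff_isRoot.mpr hroot)
    have hq0 : q ≠ 0 := by
      intro h; rw [h, mul_zero] at hq; exact hp0 hq
    have hXr : (X - C r : ℝ[X]) ≠ 0 := Polynomial.X_sub_C_ne_zero r
    have hqdeg : q.natDegree ≤ n := by
      have := Polynomial.natDegree_mul hXr hq0
      rw [← hq, hdeg', Polynomial.natDegree_X_sub_C] at this
      omega
    have hqreal : ∀ z : ℂ, (q.map (algebraMap ℝ ℂ)).IsRoot z → z.im = 0 := by
      intro w hw
      apply hreal w
      rw [hq, Polynomial.IsRoot, Polynomial.map_mul, Polynomial.eval_mul, hw, mul_zero]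
    have hiq := ih q hqdeg hqreal x
    -- algebra
    rw [hq]
    have hd1 : derivative ((X - C r) * q) = q + (X - C r) * derivative q := by
      rw [derivative_mul]; simp
    have hd2 : derivative (derivative ((X - C r) * q))
        = 2 * derivative q + (X - C r) * derivative (derivative q) := by
      rw [hd1, derivative_add, derivative_mul]; simp; ring
    rw [hd2, hd1]
    simp only [Polynomial.eval_mul, Polynomial.eval_add, Polynomial.eval_sub,
      Polynomial.eval_X, Polynomial.eval_C, Polynomial.eval_ofNat]
    set A := x - r
    set Q := q.eval x
    set Q' := (derivative q).eval x
    set Q'' := (derivative (derivative q)).eval x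
    nlinarith [sq_nonneg Q, sq_nonneg A, mul_nonneg (sq_nonneg A) (neg_nonneg.mpr (by linarith : Q * Q'' - Q' ^ 2 ≤ 0))]

/-- **Laguerre inequality.** If `p` is a real polynomial all of whose complex
zeroes are real, then `p(x)·p''(x) − (p'(x))² ≤ 0` for every real `x`. -/
theorem laguerre_inequality (p : ℝ[X])
    (hreal : ∀ z : ℂ, (p.map (algebraMap ℝ ℂ)).IsRoot z → z.im = 0) :
    ∀ x : ℝ,
      p.eval x * (derivative (derivative p)).eval x - ((derivative p).eval x) ^ 2 ≤ 0 :=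
  laguerre_aux p.natDegree p le_rfl hreal
end

section
/- If p is a real polynomial of degree n ≥ 1 with only real zeroes, then for every real x, p(x)·p''(x) − ((n−1)/n)·(p'(x))² ≤ 0. -/
/-!
Write `p = c ∏ (X - rᵢ)` and induct on the number of roots, with Newton's inequality in the
cleared form `n p p'' ≤ (n - 1) p'²`. Multiplying a polynomial `q` of degree `m ≥ 1` by a
linear factor `X - r` and writing `t = x - r`, the inequality for `(X - r) q` at degree
`m + 1`, multiplied by `m`, reduces to the one for `q` plus the square `(m q - t q')² ≥ 0`.
-/

open Polynomial

variable {R : Type*} [Field R] [LinearOrder R] [IsStrictOrderedRing R]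

def SatisfiesNewtonAt (n : R) (p : R[X]) (x : R) : Prop :=
  n * (p.eval x * (derivative (derivative p)).eval x) ≤ (n - 1) * ((derivative p).eval x) ^ 2

theorem newton_ineq_mul_linear_factor {m q q' q'' t : R} (hm : 0 < m) (h : m * (q * q'') ≤ (m - 1) * q' ^ 2) :
    (m + 1) * (t * q * (2 * q' + t * q'')) ≤ m * (q + t * q') ^ 2 := by
  refine le_of_mul_le_mul_left ?_ hm
  nlinarith [mul_le_mul_of_nonneg_left h (sq_nonneg t), sq_nonneg (m * q - t * q')]

theorem SatisfiesNewtonAt.X_sub_C_mul {m : R} {q : R[X]} {x : R} (hm : 0 < m)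
    (h : SatisfiesNewtonAt m q x) (r : R) : SatisfiesNewtonAt (m + 1) ((X - C r) * q) x := by
  have hd2 : derivative (derivative ((X - C r) * q))
      = 2 * derivative q + (X - C r) * derivative (derivative q) := by
    simp only [derivative_mul, derivative_add, derivative_sub, derivative_X, derivative_C,
      derivative_one, derivative_zero]
    ring
  unfold SatisfiesNewtonAt
  rw [hd2, derivative_mul]
  simpa using newton_ineq_mul_linear_factor (t := x - r) hm h

theorem satisfiesNewtonAt_C_mul_prod_X_sub_C (c : R) {s : Multiset R} (hs : s ≠ 0) (x : R) :
    SatisfiesNewtonAt (Multiset.card s : R) (C c * (s.map (X - C ·)).prod) x := by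
  induction s using Multiset.induction_on with
  | empty => exact absurd rfl hs
  | cons r t ih =>
    rw [Multiset.map_cons, Multiset.prod_cons, Multiset.card_cons, mul_left_comm, Nat.cast_succ]
    rcases eq_or_ne t 0 with rfl | ht
    · simp [SatisfiesNewtonAt]
    · exact (ih ht).X_sub_C_mul (by exact_mod_cast Multiset.card_pos.mpr ht) r

theorem Polynomial.Splits.satisfiesNewtonAt {p : R[X]} (hp : p.Splits) (hdeg : 0 < p.natDegree)
    (x : R) : SatisfiesNewtonAt (p.natDegree : R) p x := by
  have hroots : p.roots ≠ 0 := Multiset.card_pos.mp (hp.natDegree_eq_card_roots ▸ hdeg)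
  have h := satisfiesNewtonAt_C_mul_prod_X_sub_C p.leadingCoeff hroots x
  rwa [← hp.eq_prod_roots, ← hp.natDegree_eq_card_roots] at h

theorem splits_of_forall_isRoot_im_eq_zero {p : ℝ[X]}
    (hreal : ∀ z : ℂ, (p.map (algebraMap ℝ ℂ)).IsRoot z → z.im = 0) : p.Splits := by
  refine Splits.of_splits_map (algebraMap ℝ ℂ) (IsAlgClosed.splits _) fun z hz ↦ ?_
  exact ⟨z.re, Complex.ext rfl (hreal z (isRoot_of_mem_roots hz)).symm⟩

/-- **Differential form of the Newton inequality.** If `p` is a real polynomial of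
degree `n ≥ 1` with only real zeroes, then for every real `x`,
`p(x)·p''(x) − ((n−1)/n)·(p'(x))² ≤ 0`. -/
theorem newton_inequality_differential (p : ℝ[X]) (n : ℕ) (hn : p.natDegree = n)
    (hn1 : 1 ≤ n)
    (hreal : ∀ z : ℂ, (p.map (algebraMap ℝ ℂ)).IsRoot z → z.im = 0) :
    ∀ x : ℝ,
      p.eval x * (derivative (derivative p)).eval x
        - ((n : ℝ) - 1) / n * ((derivative p).eval x) ^ 2 ≤ 0 := by
  intro x
  have hnewton := (splits_of_forall_isRoot_im_eq_zero hreal).satisfiesNewtonAt (by omega) x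
  rw [hn] at hnewton
  have hn0 : (0 : ℝ) < n := by exact_mod_cast hn1
  rw [sub_nonpos, div_mul_eq_mul_div, le_div_iff₀ hn0, mul_comm]
  exact hnewton
end

section
/- Let p be a complex polynomial of degree n ≥ 2 with exactly d distinct zeroes, 2 ≤ d ≤ n, and let κ ∈ ℂ satisfy κ ≠ (k−1)/k for all k = 1,…,n. Then the number of zeroes (counted with multiplicity) of F_κ[p] = p·p'' − κ(p')² that are not zeroes of p equals 2d − 2. -/
/-!
Near a zero `a` of `p` of multiplicity `m`, write `p = (X - a)^m q`; then
`F_κ[p] = (X - a)^(2m-2) G` with `G(a) = m q(a)² (m - 1 - κ m)`, so `a` is a zero of `F_κ[p]`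
of multiplicity exactly `2m - 2` as long as `κ ≠ (m - 1)/m`. Likewise the coefficient of
`X^(2n-2)` in `F_κ[p]` is `lc(p)² n (n - 1 - κ n) ≠ 0`, so `F_κ[p]` has `2n - 2` zeroes in all.
Removing those at the zeroes of `p` leaves `(2n - 2) - ∑ₐ (2mₐ - 2) = 2d - 2`.
-/

open Polynomial

namespace Polynomial

section CommRing

variable {R : Type*} [CommRing R]

noncomputable def fKappa (κ : R) (p : R[X]) : R[X] :=
  p * derivative (derivative p) - C κ * derivative p ^ 2

theorem fKappa_X_sub_C_pow_mul (κ a : R) (k : ℕ) (q : R[X]) :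
    ∃ G : R[X], fKappa κ ((X - C a) ^ (k + 1) * q) = (X - C a) ^ (2 * k) * G ∧
      G.eval a = ((k : R) + 1) * q.eval a ^ 2 * (k - κ * ((k : R) + 1)) := by
  set t : R[X] := X - C a
  set r : R[X] := C ((k : R) + 1) * q + t * derivative q
  have ht : derivative t = 1 := by simp [t]
  have hta : t.eval a = 0 := by simp [t]
  have dp : derivative (t ^ (k + 1) * q) = t ^ k * r := by
    rw [derivative_mul, derivative_pow, ht]
    push_cast
    ring
  have ddp : derivative (t ^ k * r) = C (k : R) * t ^ (k - 1) * r + t ^ k * derivative r := by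
    rw [derivative_mul, derivative_pow, ht]
    ring
  refine ⟨C (k : R) * q * r + t * (q * derivative r) - C κ * r ^ 2, ?_, ?_⟩
  · rw [fKappa, dp, ddp]
    rcases k with _ | k
    · simp only [Nat.cast_zero, C_0]; ring
    · rw [Nat.add_sub_cancel]; ring
  · simp only [r, eval_sub, eval_add, eval_mul, eval_pow, eval_C, hta]
    ring

theorem natDegree_fKappa_le (κ : R) {p : R[X]} (hp : 2 ≤ p.natDegree) :
    (fKappa κ p).natDegree ≤ 2 * p.natDegree - 2 := by
  have h1 := natDegree_derivative_le p
  have h2 := natDegree_derivative_le (derivative p)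
  refine (natDegree_sub_le _ _).trans (max_le ?_ ?_)
  · exact natDegree_mul_le.trans (by omega)
  · refine natDegree_C_mul_le _ _ |>.trans ((natDegree_pow_le).trans ?_)
    omega

theorem coeff_fKappa_two_mul_natDegree_sub_two (κ : R) {p : R[X]} (hp : 2 ≤ p.natDegree) :
    (fKappa κ p).coeff (2 * p.natDegree - 2) =
      p.leadingCoeff ^ 2 * p.natDegree * (p.natDegree - 1 - κ * p.natDegree) := by
  set n := p.natDegree
  have h1 : (derivative p).natDegree ≤ n - 1 := by
    have := natDegree_derivative_le p; omega
  have h2 : (derivative (derivative p)).natDegree ≤ n - 2 := by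
    have := natDegree_derivative_le (derivative p); omega
  have c1 : (derivative p).coeff (n - 1) = p.leadingCoeff * n := by
    rw [coeff_derivative, Nat.sub_add_cancel (by omega : 1 ≤ n),
      Nat.cast_sub (by omega : 1 ≤ n), coeff_natDegree]
    ring
  have c2 : (derivative (derivative p)).coeff (n - 2) = p.leadingCoeff * n * (n - 1) := by
    rw [coeff_derivative, (by omega : n - 2 + 1 = n - 1), c1, Nat.cast_sub (by omega : 2 ≤ n)]
    push_cast
    ring
  rw [fKappa, coeff_sub, coeff_C_mul, sq (derivative p),
    (by omega : 2 * n - 2 = n + (n - 2)), coeff_mul_add_eq_of_natDegree_le le_rfl h2,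
    (by omega : n + (n - 2) = (n - 1) + (n - 1)), coeff_mul_add_eq_of_natDegree_le h1 h1, c1, c2,
    coeff_natDegree]
  ring

end CommRing

section Field

variable {K : Type*} [Field K] [CharZero K]

theorem rootMultiplicity_fKappa {κ a : K} {p : K[X]} (hp : p ≠ 0) (ha : p.IsRoot a)
    (hκ : κ ≠ ((rootMultiplicity a p : K) - 1) / rootMultiplicity a p) :
    rootMultiplicity a (fKappa κ p) = 2 * rootMultiplicity a p - 2 := by
  obtain ⟨q, hpq, hqa⟩ := exists_eq_pow_rootMultiplicity_mul_and_not_dvd p hp a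
  obtain ⟨k, hk⟩ : ∃ k, rootMultiplicity a p = k + 1 :=
    Nat.exists_eq_add_one.mpr ((rootMultiplicity_pos hp).mpr ha)
  rw [hk] at hpq hκ ⊢
  obtain ⟨G, hF, hG⟩ := fKappa_X_sub_C_pow_mul κ a k q
  have hGa : G.eval a ≠ 0 := by
    have hq : q.eval a ≠ 0 := fun h => hqa (dvd_iff_isRoot.mpr h)
    have hk1 : (k : K) + 1 ≠ 0 := Nat.cast_add_one_ne_zero k
    push_cast at hκ
    rw [hG]
    refine mul_ne_zero (mul_ne_zero hk1 (pow_ne_zero 2 hq)) (sub_ne_zero.mpr fun h => hκ ?_)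
    rw [eq_div_iff hk1]
    linear_combination -h
  rw [hpq, hF, rootMultiplicity_mul (mul_ne_zero (pow_ne_zero _ (X_sub_C_ne_zero a))
    fun h => hGa (by simp [h])), rootMultiplicity_X_sub_C_pow, rootMultiplicity_eq_zero hGa]
  omega

theorem natDegree_fKappa {κ : K} {p : K[X]} (hp : 2 ≤ p.natDegree)
    (hκ : κ ≠ ((p.natDegree : K) - 1) / p.natDegree) :
    (fKappa κ p).natDegree = 2 * p.natDegree - 2 := by
  refine (natDegree_fKappa_le κ hp).antisymm (le_natDegree_of_ne_zero ?_)
  have hn : (p.natDegree : K) ≠ 0 := Nat.cast_ne_zero.mpr (by omega)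
  have hlc : p.leadingCoeff ≠ 0 := leadingCoeff_ne_zero.mpr (by rintro rfl; simp at hp)
  rw [coeff_fKappa_two_mul_natDegree_sub_two κ hp]
  refine mul_ne_zero (mul_ne_zero (pow_ne_zero 2 hlc) hn) (sub_ne_zero.mpr fun h => hκ ?_)
  rw [eq_div_iff hn]
  linear_combination -h

end Field

section Roots

variable {R : Type*} [CommRing R] [IsDomain R] [DecidableEq R]

theorem card_filter_roots_add_sum_rootMultiplicity (f : R[X]) {p : R[X]} (hp : p ≠ 0) :
    Multiset.card (f.roots.filter fun z => p.eval z ≠ 0) +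
      ∑ a ∈ p.roots.toFinset, rootMultiplicity a f = Multiset.card f.roots := by
  have hcount : ∑ a ∈ p.roots.toFinset, rootMultiplicity a f =
      Multiset.card (f.roots.filter fun z => ¬p.eval z ≠ 0) := by
    rw [← Multiset.sum_count_eq_card (s := p.roots.toFinset)]
    · refine Finset.sum_congr rfl fun a ha => ?_
      rw [Multiset.mem_toFinset, mem_roots hp] at ha
      rw [Multiset.count_filter, if_pos (not_not.mpr ha : ¬p.eval a ≠ 0), count_roots]
    · intro a ha
      rw [Multiset.mem_filter, not_not] at ha
      exact Multiset.mem_toFinset.mpr ((mem_roots hp).mpr ha.2)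
  rw [hcount, ← Multiset.card_add, Multiset.filter_add_not]

theorem sum_two_mul_rootMultiplicity_sub_two (p : R[X]) :
    ∑ a ∈ p.roots.toFinset, (2 * rootMultiplicity a p - 2) =
      2 * Multiset.card p.roots - 2 * p.roots.toFinset.card := by
  have hpos : ∀ a ∈ p.roots.toFinset, 2 ≤ 2 * rootMultiplicity a p := fun a ha =>
    Nat.mul_le_mul_left 2 (count_roots p ▸ Multiset.one_le_count_iff_mem.mpr
      (Multiset.mem_toFinset.mp ha))
  have hsum : ∑ a ∈ p.roots.toFinset, rootMultiplicity a p = Multiset.card p.roots := by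
    simpa only [count_roots] using Multiset.toFinset_sum_count_eq p.roots
  rw [Finset.sum_tsub_distrib _ hpos, ← Finset.mul_sum, hsum, Finset.sum_const, smul_eq_mul,
    mul_comm _ 2]

end Roots

end Polynomial

open scoped Classical in
/-- If `p` is a complex polynomial of degree `n ≥ 2` with exactly `d` distinct
zeroes, `2 ≤ d ≤ n`, and `κ ≠ (k−1)/k` for all `k = 1, …, n`, then the number of
zeroes (with multiplicity) of `F_κ[p] = p·p'' − κ(p')²` which are not zeroes of `p`
equals `2d − 2`. -/
theorem card_nontrivial_roots_F_kappa (p : ℂ[X]) (n d : ℕ) (hn : p.natDegree = n)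
    (hn2 : 2 ≤ n) (hd : p.roots.toFinset.card = d) (hd2 : 2 ≤ d) (hdn : d ≤ n)
    (κ : ℂ) (hκ : ∀ k : ℕ, 1 ≤ k → k ≤ n → κ ≠ ((k : ℂ) - 1) / k) :
    Multiset.card
      ((p * derivative (derivative p) - C κ * (derivative p) ^ 2).roots.filter
        (fun z => p.eval z ≠ 0)) = 2 * d - 2 := by
  have hp : p ≠ 0 := by rintro rfl; simp at hn; omega
  have hmult : ∀ a ∈ p.roots.toFinset,
      rootMultiplicity a (fKappa κ p) = 2 * rootMultiplicity a p - 2 := fun a ha => by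
    have hroot : p.IsRoot a := (mem_roots hp).mp (Multiset.mem_toFinset.mp ha)
    refine rootMultiplicity_fKappa hp hroot (hκ _ ((rootMultiplicity_pos hp).mpr hroot) ?_)
    rw [← hn, ← count_roots]
    exact (Multiset.count_le_card _ _).trans (card_roots' p)
  have hcount := card_filter_roots_add_sum_rootMultiplicity (fKappa κ p) hp
  rw [Finset.sum_congr rfl hmult, sum_two_mul_rootMultiplicity_sub_two,
    IsAlgClosed.card_roots_eq_natDegree, IsAlgClosed.card_roots_eq_natDegree,
    natDegree_fKappa (hn ▸ hn2) (hn ▸ hκ n (by omega) le_rfl), hn, hd] at hcount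
  unfold fKappa at hcount
  omega
end

section
/- Let p be a real polynomial with only real zeroes, let l ≥ 1, and let ξ ∈ ℝ satisfy p^{(l)}(ξ) = 0, p^{(l-1)}(ξ) ≠ 0 and p^{(l+1)}(ξ) ≠ 0. Then p^{(l-1)}(ξ)·p^{(l+1)}(ξ) < 0. -/
open Polynomial


/-- Key hessian-type inequality for products of linear factors. -/
lemma deGua_aux_le (ξ : ℝ) (s : Multiset ℝ) :
    (derivative (derivative ((s.map fun r => X - C r).prod))).eval ξ *
      ((s.map fun r => X - C r).prod).eval ξ
      ≤ ((derivative ((s.map fun r => X - C r).prod)).eval ξ) ^ 2 := by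
  induction s using Multiset.induction with
  | empty => simp
  | cons r t ih =>
    set h : ℝ[X] := (t.map fun r => X - C r).prod with hh
    have hq : ((r ::ₘ t).map fun r => X - C r).prod = (X - C r) * h := by
      simp [hh]
    rw [hq]
    have d1 : derivative ((X - C r) * h) = h + (X - C r) * derivative h := by
      simp [derivative_mul]
    have d2 : derivative (h + (X - C r) * derivative h)
        = 2 * derivative h + (X - C r) * derivative (derivative h) := by
      simp [derivative_mul]; ring
    rw [d1, d2]
    simp only [eval_add, eval_mul, eval_sub, eval_X, eval_C, eval_ofNat]
    nlinarith [sq_nonneg ((ξ - r) * (derivative h).eval ξ - h.eval ξ),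
      mul_nonneg (sq_nonneg (ξ - r))
        (sub_nonneg.mpr (ih : _ ≤ _)), sq_nonneg (h.eval ξ)]

/-- Strict version for a nonempty multiset when `ξ` is not a root. -/
lemma deGua_aux_lt (ξ : ℝ) (s : Multiset ℝ) (hs : s ≠ 0)
    (hne : ((s.map fun r => X - C r).prod).eval ξ ≠ 0) :
    (derivative (derivative ((s.map fun r => X - C r).prod))).eval ξ *
      ((s.map fun r => X - C r).prod).eval ξ
      < ((derivative ((s.map fun r => X - C r).prod)).eval ξ) ^ 2 := by
  obtain ⟨a, ha⟩ := Multiset.exists_mem_of_ne_zero hs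
  obtain ⟨t, rfl⟩ := Multiset.exists_cons_of_mem ha
  set h : ℝ[X] := (t.map fun r => X - C r).prod with hh
  have hq : ((a ::ₘ t).map fun r => X - C r).prod = (X - C a) * h := by
    simp [hh]
  rw [hq] at hne ⊢
  have hhne : h.eval ξ ≠ 0 := fun h0 => hne (by simp [h0])
  have d1 : derivative ((X - C a) * h) = h + (X - C a) * derivative h := by
    simp [derivative_mul]
  have d2 : derivative (h + (X - C a) * derivative h)
      = 2 * derivative h + (X - C a) * derivative (derivative h) := by
    simp [derivative_mul]; ring
  rw [d1, d2]
  simp only [eval_add, eval_mul, eval_sub, eval_X, eval_C, eval_ofNat]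
  have ih := deGua_aux_le ξ t
  rw [← hh] at ih
  nlinarith [sq_nonneg ((ξ - a) * (derivative h).eval ξ - h.eval ξ),
    mul_nonneg (sq_nonneg (ξ - a)) (sub_nonneg.mpr ih),
    sq_pos_of_ne_zero hhne]

/-- A real polynomial all of whose complex roots are real splits over `ℝ`. -/
lemma deGua_splits (p : ℝ[X])
    (hreal : ∀ z : ℂ, (p.map (algebraMap ℝ ℂ)).IsRoot z → z.im = 0) :
    p.Splits := by
  apply Splits.of_splits_map (algebraMap ℝ ℂ) (IsAlgClosed.splits _)
  intro a ha
  have him : a.im = 0 := by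
    by_cases hp : p.map (algebraMap ℝ ℂ) = 0
    · exact hreal a (by simp [IsRoot, hp])
    · exact hreal a ((mem_roots hp).1 ha)
  refine ⟨a.re, ?_⟩
  apply Complex.ext
  · simp
  · simp [him]

lemma deGua_splits_derivative (p : ℝ[X]) (hp' : derivative p ≠ 0)
    (h : p.Splits) : (derivative p).Splits := by
  rw [splits_iff_card_roots] at h ⊢
  have hd : p.natDegree ≠ 0 := by
    intro h0
    exact hp' (by rw [eq_C_of_natDegree_eq_zero h0, derivative_C])
  have hdeg : (derivative p).natDegree = p.natDegree - 1 := by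
    have := degree_derivative_eq p (Nat.pos_of_ne_zero hd)
    exact natDegree_eq_of_degree_eq_some this
  refine le_antisymm ((derivative p).card_roots' ) ?_
  rw [hdeg, ← h]
  exact Nat.sub_le_of_le_add (card_roots_le_derivative p)

/-- **De Gua's rule.** Let `p` be a real polynomial with only real zeroes, `l ≥ 1`,
and `ξ` a real zero of `p⁽ˡ⁾` with `p⁽ˡ⁻¹⁾(ξ) ≠ 0` and `p⁽ˡ⁺¹⁾(ξ) ≠ 0`. Then
`p⁽ˡ⁻¹⁾(ξ)·p⁽ˡ⁺¹⁾(ξ) < 0`. -/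
theorem de_gua_rule (p : ℝ[X])
    (hreal : ∀ z : ℂ, (p.map (algebraMap ℝ ℂ)).IsRoot z → z.im = 0)
    (l : ℕ) (hl : 1 ≤ l) (ξ : ℝ)
    (h0 : (derivative^[l] p).eval ξ = 0)
    (h1 : (derivative^[l - 1] p).eval ξ ≠ 0)
    (h2 : (derivative^[l + 1] p).eval ξ ≠ 0) :
    (derivative^[l - 1] p).eval ξ * (derivative^[l + 1] p).eval ξ < 0 := by
  obtain ⟨k, rfl⟩ : ∃ k, l = k + 1 := ⟨l - 1, (Nat.succ_pred_eq_of_pos hl).symm⟩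
  simp only [Nat.add_sub_cancel] at h1 ⊢
  set q : ℝ[X] := derivative^[k] p with hqdef
  have hq1 : derivative^[k + 1] p = derivative q := by
    rw [Function.iterate_succ_apply']
  have hq2 : derivative^[k + 1 + 1] p = derivative (derivative q) := by
    rw [Function.iterate_succ_apply', hq1]
  rw [hq2] at h2 ⊢
  rw [hq1] at h0
  -- q splits over ℝ
  have hsplit : ∀ m, derivative^[m] p ≠ 0 → (derivative^[m] p).Splits := by
    intro m
    induction m with
    | zero => exact fun _ => deGua_splits p hreal
    | succ n ih =>
      intro hn
      rw [Function.iterate_succ_apply'] at hn ⊢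
      have hn' : derivative^[n] p ≠ 0 := fun h => hn (by rw [h, map_zero])
      exact deGua_splits_derivative _ hn (ih hn')
  have hq'' : derivative (derivative q) ≠ 0 := fun h => h2 (by rw [h]; simp)
  have hq' : derivative q ≠ 0 := fun h => hq'' (by rw [h, map_zero])
  have hqne : q ≠ 0 := fun h => hq' (by rw [h, map_zero])
  have hqs : q.Splits := hsplit k hqne
  -- factor q
  have hfac : q = C q.leadingCoeff * (q.roots.map fun a => X - C a).prod :=
    hqs.eq_prod_roots
  have hc : q.leadingCoeff ≠ 0 := leadingCoeff_ne_zero.2 hqne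
  set s : Multiset ℝ := q.roots with hs
  set P : ℝ[X] := (s.map fun a => X - C a).prod with hP
  have hsne : s ≠ 0 := by
    intro h
    have : q.natDegree = 0 := by
      rw [← splits_iff_card_roots.1 hqs, ← hs, h]; rfl
    exact hq' (by rw [eq_C_of_natDegree_eq_zero this, derivative_C])
  have hPne : P.eval ξ ≠ 0 := by
    intro h
    apply h1
    conv_lhs => rw [hfac]
    simp [h]
  have key := deGua_aux_lt ξ s hsne hPne
  rw [← hP] at key
  -- translate evaluations
  have e0 : q.eval ξ = q.leadingCoeff * P.eval ξ := by
    conv_lhs => rw [hfac]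
    simp
  have dq : derivative q = C q.leadingCoeff * derivative P := by
    conv_lhs => rw [hfac]
    rw [derivative_mul, derivative_C, zero_mul, zero_add]
  have dq2 : derivative (derivative q) = C q.leadingCoeff * derivative (derivative P) := by
    rw [dq, derivative_mul, derivative_C, zero_mul, zero_add]
  have e1 : (derivative q).eval ξ = q.leadingCoeff * (derivative P).eval ξ := by
    rw [dq]; simp
  have e2 : (derivative (derivative q)).eval ξ
      = q.leadingCoeff * (derivative (derivative P)).eval ξ := by
    rw [dq2]; simp
  have hP' : (derivative P).eval ξ = 0 := by
    rw [e1] at h0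
    exact (mul_eq_zero.1 h0).resolve_left hc
  rw [hP'] at key
  norm_num at key
  rw [e0, e2]
  nlinarith [sq_pos_of_ne_zero hc, key]
end

section
/- Let p be a complex polynomial p(z) = a₀zⁿ + a₁z^{n−1} + ⋯ of degree n ≥ 2 of the form p(z) = a₀(z + a₁/(a₀n))ⁿ + q(z) where q is a polynomial of degree n − l − 1 with 1 ≤ l ≤ n − 1 and leading coefficient b ≠ 0. Then the polynomial F_{(n−1)/n}[p] = p·p'' − ((n−1)/n)(p')² has degree exactly 2n − 3 − l, with leading coefficient a₀·b·l·(l+1). -/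
/-!
Put `u = X - C λ`, so that `p = a₀ uⁿ + q`. Since `c n = n - 1` for `c = (n - 1)/n`, the
`a₀²`-terms cancel in `F_c[p]`, leaving
`F_c[p] = a₀ uⁿ q'' - 2(n - 1) a₀ uⁿ⁻¹ q' + a₀ n (n - 1) uⁿ⁻² q + F_c[q]`.
With `m = deg q = n - l - 1`, the first three terms have degree at most `n - 2 + m`, with
coefficients there summing to
`a₀ b (m(m - 1) - 2(n - 1)m + n(n - 1)) = a₀ b (n - m)(n - m - 1) = a₀ b (l + 1) l`,
while `F_c[q]` has degree at most `2m - 2 < n - 2 + m`.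
-/

open Polynomial

noncomputable def F {R : Type*} [CommRing R] (c : R) (p : R[X]) : R[X] :=
  p * derivative (derivative p) - C c * derivative p ^ 2

section

variable {R : Type*} [CommRing R] {c : R} {k : ℕ}

theorem F_C_mul_X_sub_C_pow_add (hc : c * (k + 2) = k + 1) (a t : R) (q : R[X]) :
    F c (C a * (X - C t) ^ (k + 2) + q) =
      C a * ((X - C t) ^ (k + 2) * derivative^[2] q)
      - C (2 * (k + 1) * a) * ((X - C t) ^ (k + 1) * derivative^[1] q)
      + C (a * (k + 2) * (k + 1)) * ((X - C t) ^ k * derivative^[0] q)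
      + F c q := by
  have hd : ∀ j : ℕ, derivative ((X - C t) ^ (j + 1)) = C ((j : R) + 1) * (X - C t) ^ j := by
    intro j
    rw [derivative_X_sub_C_pow, Nat.add_sub_cancel]
    push_cast; rfl
  have hC : C c * (k + 2 : R[X]) = k + 1 := by
    simpa only [map_mul, map_add, map_natCast, map_ofNat, map_one] using congrArg C hc
  simp only [F, Function.iterate_succ, Function.iterate_zero, Function.comp_apply, id,
    derivative_add, derivative_mul, derivative_C, zero_mul, zero_add]
  rw [show k + 2 = (k + 1) + 1 from rfl, hd, derivative_mul, derivative_C, zero_mul, zero_add, hd]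
  push_cast
  simp only [map_add, map_natCast, map_ofNat, map_one, C_mul]
  linear_combination (-(C a ^ 2 * (k + 2 : R[X]) * (X - C t) ^ (2 * k + 2))
    - 2 * C a * (X - C t) ^ (k + 1) * derivative q) * hC

theorem coeff_F_eq_zero {q : R[X]} {m i : ℕ} (hq : q.natDegree ≤ m) (hi : 2 * m < i + 2) :
    (F c q).coeff i = 0 := by
  rcases Nat.eq_zero_or_pos m with rfl | hm
  · have hq' : derivative^[1] q = 0 := iterate_derivative_eq_zero (by omega)
    simp_all [F]
  have h1 : (derivative q).natDegree ≤ m - 1 := (natDegree_derivative_le q).trans (by omega)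
  refine coeff_eq_zero_of_natDegree_lt ((natDegree_sub_le _ _).trans_lt (max_lt ?_ ?_))
  · rcases lt_or_ge m 2 with hm2 | hm2
    · have hq'' : derivative^[2] q = 0 := iterate_derivative_eq_zero (by omega)
      simp only [Function.iterate_succ, Function.iterate_zero, Function.comp_apply, id] at hq''
      rw [hq'', mul_zero, natDegree_zero]
      omega
    · have h2 := (natDegree_derivative_le (derivative q)).trans (Nat.sub_le_sub_right h1 1)
      exact natDegree_mul_le.trans_lt (by omega)
  · exact (natDegree_C_mul_le _ _).trans_lt (natDegree_pow_le.trans_lt (by omega))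

variable [Nontrivial R]

theorem natDegree_X_sub_C_pow_mul_iterate_derivative_le (t : R) {q : R[X]} (j i : ℕ) {m : ℕ}
    (hq : q.natDegree ≤ m) : ((X - C t) ^ (j + i) * derivative^[i] q).natDegree ≤ j + m := by
  rcases le_or_gt i m with h | h
  · refine natDegree_mul_le.trans ?_
    rw [(monic_X_sub_C t).natDegree_pow, natDegree_X_sub_C]
    have := (natDegree_iterate_derivative q i).trans (Nat.sub_le_sub_right hq i)
    omega
  · rw [iterate_derivative_eq_zero (hq.trans_lt h), mul_zero, natDegree_zero]
    exact Nat.zero_le _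

theorem coeff_X_sub_C_pow_mul_iterate_derivative (t : R) {q : R[X]} (j i : ℕ) {m : ℕ}
    (hq : q.natDegree ≤ m) :
    ((X - C t) ^ (j + i) * derivative^[i] q).coeff (j + m) = m.descFactorial i • q.coeff m := by
  rcases le_or_gt i m with h | h
  · obtain ⟨d, rfl⟩ : ∃ d, m = d + i := ⟨m - i, by omega⟩
    have hu : ((X - C t) ^ (j + i)).natDegree = j + i := by
      rw [(monic_X_sub_C t).natDegree_pow, natDegree_X_sub_C, mul_one]
    have hlead : ((X - C t) ^ (j + i)).coeff (j + i) = 1 := by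
      simpa only [hu] using ((monic_X_sub_C t).pow (j + i)).coeff_natDegree
    have hd : (derivative^[i] q).natDegree ≤ d :=
      (natDegree_iterate_derivative q i).trans (by omega)
    rw [show j + (d + i) = (j + i) + d by ring, coeff_mul_add_eq_of_natDegree_le hu.le hd,
      ← coeff_iterate_derivative, hlead, one_mul]
  · rw [iterate_derivative_eq_zero (hq.trans_lt h), mul_zero, coeff_zero,
      Nat.descFactorial_eq_zero_iff_lt.mpr h, zero_smul]

theorem natDegree_F_C_mul_X_sub_C_pow_add_le (hc : c * (k + 2) = k + 1) (a t : R) {q : R[X]}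
    (hq : q.natDegree ≤ k + 1) :
    (F c (C a * (X - C t) ^ (k + 2) + q)).natDegree ≤ k + q.natDegree := by
  have hA := fun i ↦ natDegree_X_sub_C_pow_mul_iterate_derivative_le t k i (le_refl q.natDegree)
  have h0 := hA 0
  simp only [add_zero] at h0
  rw [natDegree_le_iff_coeff_eq_zero]
  intro i hi
  simp only [F_C_mul_X_sub_C_pow_add hc, coeff_add, coeff_sub, coeff_C_mul]
  rw [coeff_eq_zero_of_natDegree_lt ((hA 2).trans_lt hi),
    coeff_eq_zero_of_natDegree_lt ((hA 1).trans_lt hi),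
    coeff_eq_zero_of_natDegree_lt (h0.trans_lt hi), coeff_F_eq_zero le_rfl (by omega)]
  ring

theorem coeff_F_C_mul_X_sub_C_pow_add (hc : c * (k + 2) = k + 1) (a t : R) {q : R[X]} {l : ℕ}
    (hq : q.natDegree + l = k + 1) :
    (F c (C a * (X - C t) ^ (k + 2) + q)).coeff (k + q.natDegree)
      = a * q.leadingCoeff * l * (l + 1) := by
  have hA := fun i ↦ coeff_X_sub_C_pow_mul_iterate_derivative t k i (le_refl q.natDegree)
  have h0 := hA 0
  simp only [add_zero] at h0
  have hm : (q.natDegree : R) + l = k + 1 := by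
    simpa only [Nat.cast_add, Nat.cast_one] using congrArg (Nat.cast (R := R)) hq
  simp only [F_C_mul_X_sub_C_pow_add hc, coeff_add, coeff_sub, coeff_C_mul]
  rw [hA 2, hA 1, h0, coeff_F_eq_zero le_rfl (by omega), Nat.descFactorial_one,
    Nat.descFactorial_zero, nsmul_eq_mul, nsmul_eq_mul, nsmul_eq_mul, Nat.cast_descFactorial_two,
    ← leadingCoeff]
  push_cast
  linear_combination (q.leadingCoeff * a * ((q.natDegree : R) - k - 2 - l)) * hm

end

theorem natDegree_F_C_mul_X_sub_C_pow_add {R : Type*} [CommRing R] [IsDomain R] [CharZero R]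
    {c a : R} {k l : ℕ} (hc : c * (k + 2) = k + 1) (t : R) {q : R[X]} (ha : a ≠ 0)
    (hq0 : q ≠ 0) (hl : l ≠ 0) (hq : q.natDegree + l = k + 1) :
    (F c (C a * (X - C t) ^ (k + 2) + q)).natDegree = k + q.natDegree ∧
      (F c (C a * (X - C t) ^ (k + 2) + q)).leadingCoeff = a * q.leadingCoeff * l * (l + 1) := by
  have hcoeff := coeff_F_C_mul_X_sub_C_pow_add hc a t hq
  have hne : a * q.leadingCoeff * l * (l + 1) ≠ 0 := by
    have hl1 : (l : R) + 1 ≠ 0 := by exact_mod_cast Nat.succ_ne_zero l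
    simp [ha, hq0, hl, hl1]
  have hdeg := natDegree_eq_of_le_of_coeff_ne_zero
    (natDegree_F_C_mul_X_sub_C_pow_add_le hc a t (by omega)) (hcoeff ▸ hne)
  exact ⟨hdeg, by rw [leadingCoeff, hdeg, hcoeff]⟩

theorem degree_F_exceptional_general (p q : ℂ[X]) (n l : ℕ)
    (hl1 : 1 ≤ l) (hl2 : l ≤ n - 1)
    (hq : q = p - C p.leadingCoeff *
      (X - C (-(p.coeff (n - 1)) / (p.leadingCoeff * n))) ^ n)
    (hq0 : q ≠ 0) (hqdeg : q.natDegree = n - l - 1) :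
    (p * derivative (derivative p)
        - C (((n : ℂ) - 1) / n) * (derivative p) ^ 2).natDegree = 2 * n - 3 - l ∧
    (p * derivative (derivative p)
        - C (((n : ℂ) - 1) / n) * (derivative p) ^ 2).leadingCoeff
      = p.leadingCoeff * q.leadingCoeff * l * (l + 1) := by
  obtain ⟨k, rfl⟩ : ∃ k, n = k + 2 := ⟨n - 2, by omega⟩
  set a := p.leadingCoeff
  set t := -p.coeff (k + 2 - 1) / (a * ((k + 2 : ℕ) : ℂ))
  have hp : p = C a * (X - C t) ^ (k + 2) + q := by rw [hq]; ring
  have ha : a ≠ 0 := fun h ↦ hq0 (by rw [hq, h, leadingCoeff_eq_zero.mp h]; simp)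
  have hc : (((k + 2 : ℕ) : ℂ) - 1) / ((k + 2 : ℕ) : ℂ) * (k + 2) = k + 1 := by
    have hN : (k : ℂ) + 2 ≠ 0 := by exact_mod_cast Nat.succ_ne_zero (k + 1)
    push_cast
    field_simp
    ring
  obtain ⟨hdeg, hlead⟩ :=
    natDegree_F_C_mul_X_sub_C_pow_add hc t ha hq0 (l := l) (by omega) (by omega)
  rw [← hp] at hdeg hlead
  exact ⟨hdeg.trans (by omega), hlead⟩

/-- Let `p` be a complex polynomial of degree `n ≥ 2` with leading coefficient `a₀`,
subleading coefficient `a₁`, and suppose `p(z) = a₀(z − λ)ⁿ + q(z)` where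
`λ = −a₁/(a₀·n)` and `q ≠ 0` has degree `n − l − 1` with `1 ≤ l ≤ n − 1` and
leading coefficient `b`. Then `F_{(n−1)/n}[p] = p·p'' − ((n−1)/n)·(p')²` has degree
exactly `2n − 3 − l` with leading coefficient `a₀·b·l·(l+1)`. -/
theorem degree_F_exceptional (p q : ℂ[X]) (n l : ℕ) (hn : p.natDegree = n) (hn2 : 2 ≤ n)
    (hl1 : 1 ≤ l) (hl2 : l ≤ n - 1)
    (hq : q = p - C p.leadingCoeff *
      (X - C (-(p.coeff (n - 1)) / (p.leadingCoeff * n))) ^ n)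
    (hq0 : q ≠ 0) (hqdeg : q.natDegree = n - l - 1) :
    (p * derivative (derivative p)
        - C (((n : ℂ) - 1) / n) * (derivative p) ^ 2).natDegree = 2 * n - 3 - l ∧
    (p * derivative (derivative p)
        - C (((n : ℂ) - 1) / n) * (derivative p) ^ 2).leadingCoeff
      = p.leadingCoeff * q.leadingCoeff * l * (l + 1) :=
  degree_F_exceptional_general p q n l hl1 hl2 hq hq0 hqdeg
end

section
/- Let p be a complex polynomial of the form p(z) = a₀(z − λ)ⁿ + q(z) with n ≥ 2, a₀ ≠ 0, and deg q = k − 1 for some 1 ≤ k ≤ n − 1. Then the number d of distinct complex zeroes of p satisfies d ≥ ⌈(n − k + 3)/2⌉, hence d ≥ ⌊(n−k)/2⌋ + 2 ≥ 2. -/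
open Polynomial

/-- If `p(z) = a₀(z − λ)ⁿ + q(z)` with `a₀ ≠ 0`, `n ≥ 2`, and `q ≠ 0` of degree
`k − 1` for some `1 ≤ k ≤ n − 1`, then the number `d` of distinct complex zeroes of
`p` satisfies `d ≥ ⌈(n − k + 3)/2⌉`; in particular `d ≥ ⌊(n − k)/2⌋ + 2 ≥ 2`. -/
theorem lower_bound_distinct_roots (a₀ l : ℂ) (ha : a₀ ≠ 0) (n k : ℕ) (hn : 2 ≤ n)
    (hk1 : 1 ≤ k) (hk2 : k ≤ n - 1) (q : ℂ[X]) (hq0 : q ≠ 0) (hqdeg : q.natDegree = k - 1)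
    (p : ℂ[X]) (hp : p = C a₀ * (X - C l) ^ n + q) :
    ((n : ℝ) - k + 3) / 2 ≤ (p.roots.toFinset.card : ℝ) ∧
    (n - k) / 2 + 2 ≤ p.roots.toFinset.card := by
  obtain ⟨k', rfl⟩ : ∃ k', k = k' + 1 := ⟨k - 1, (Nat.succ_pred_eq_of_pos hk1).symm⟩
  have hqdeg' : q.natDegree = k' := by omega
  have hkn : k' + 2 ≤ n := by omega
  -- p has degree n
  have hdeglead : (C a₀ * (X - C l) ^ n).degree = (n : WithBot ℕ) := by
    rw [degree_C_mul ha, degree_pow, degree_X_sub_C]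
    simp
  have hdegp : p.degree = (n : WithBot ℕ) := by
    rw [hp, add_comm, degree_add_eq_right_of_degree_lt]
    · exact hdeglead
    · rw [hdeglead]
      calc q.degree ≤ (q.natDegree : WithBot ℕ) := degree_le_natDegree
        _ < (n : WithBot ℕ) := by
            rw [hqdeg']; exact_mod_cast (by omega : k' < n)
  have hpne : p ≠ 0 := fun h => by simp [h] at hdegp
  have hnatdegp : p.natDegree = n := natDegree_eq_of_degree_eq_some hdegp
  -- the auxiliary polynomial h
  set h : ℂ[X] := C (n : ℂ) * p - (X - C l) * derivative p with hh_def
  have hder : derivative p = C a₀ * ((n : ℂ[X]) * (X - C l) ^ (n - 1)) + derivative q := by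
    rw [hp]
    simp [derivative_pow]
  have hh : h = C (n : ℂ) * q - (X - C l) * derivative q := by
    rw [hh_def, hder, hp]
    obtain ⟨n', rfl⟩ : ∃ n', n = n' + 1 := ⟨n - 1, by omega⟩
    simp only [Nat.add_sub_cancel, ← C_eq_natCast]
    ring
  -- h has degree ≤ k' and is nonzero
  have hdq : (derivative q).natDegree ≤ k' - 1 := by
    simpa [hqdeg'] using q.natDegree_derivative_le
  have hhdeg : h.natDegree ≤ k' := by
    rw [hh]
    refine (natDegree_sub_le _ _).trans ?_
    simp only [max_le_iff]
    constructor
    · exact (natDegree_C_mul_le _ _).trans (by omega)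
    · rcases Nat.eq_zero_or_pos k' with hk0 | hk0
      · have hz : derivative q = 0 := by
          rw [Polynomial.eq_C_of_natDegree_eq_zero (show q.natDegree = 0 by omega)]
          simp
        simp [hz]
      · refine (natDegree_mul_le).trans ?_
        have h1 : (X - C l).natDegree = 1 := natDegree_X_sub_C l
        omega
  have hc : q.coeff k' ≠ 0 := by
    rw [← hqdeg']
    exact mt leadingCoeff_eq_zero.mp hq0 ∘ id
  have hhne : h ≠ 0 := by
    intro h0
    have hcoeff : h.coeff k' = 0 := by rw [h0]; simp
    rw [hh] at hcoeff
    have h1 : ((X - C l) * derivative q).coeff k' = (k' : ℂ) * q.coeff k' := by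
      rw [sub_mul, coeff_sub, coeff_C_mul]
      rcases Nat.eq_zero_or_pos k' with hk0 | hk0
      · subst hk0
        have : derivative q = 0 := by
          have : q = C (q.coeff 0) := Polynomial.eq_C_of_natDegree_eq_zero (by omega)
          rw [this]; simp
        simp [this]
      · obtain ⟨j, rfl⟩ : ∃ j, k' = j + 1 := ⟨k' - 1, by omega⟩
        rw [coeff_X_mul, coeff_derivative, coeff_derivative]
        have : q.coeff (j + 1 + 1) = 0 :=
          coeff_eq_zero_of_natDegree_lt (by omega)
        rw [this]
        push_cast
        ring
    rw [coeff_sub, coeff_C_mul, h1] at hcoeff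
    have : ((n : ℂ) - k') * q.coeff k' = 0 := by ring_nf; ring_nf at hcoeff; linear_combination hcoeff
    rcases mul_eq_zero.mp this with h2 | h2
    · have : (n : ℂ) = (k' : ℂ) := by linear_combination h2
      exact absurd (Nat.cast_injective this) (by omega)
    · exact hc h2
  -- every root of p of multiplicity m gives (X - z)^(m-1) ∣ h
  have hdvd : ∀ z ∈ p.roots.toFinset,
      p.rootMultiplicity z - 1 ≤ h.rootMultiplicity z := by
    intro z hz
    rw [le_rootMultiplicity_iff hhne]
    have h1 : (X - C z) ^ (p.rootMultiplicity z - 1) ∣ p :=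
      dvd_trans (pow_dvd_pow _ (Nat.sub_le _ _)) (p.pow_rootMultiplicity_dvd z)
    have h2 : (X - C z) ^ (p.rootMultiplicity z - 1) ∣ derivative p :=
      pow_sub_one_dvd_derivative_of_pow_dvd (p.pow_rootMultiplicity_dvd z)
    exact dvd_sub (h1.mul_left _) (h2.mul_left _)
  -- counting
  have hcardroots : p.roots.card = n := by
    rw [← hnatdegp]
    exact (splits_iff_card_roots.mp (IsAlgClosed.splits p))
  set S := p.roots.toFinset with hS
  have hsum : ∑ z ∈ S, p.roots.count z = n := by
    rw [Multiset.toFinset_sum_count_eq, hcardroots]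
  -- sum of multiplicities minus one is at most k'
  have hsum2 : ∑ z ∈ S, (p.rootMultiplicity z - 1) ≤ k' := by
    calc ∑ z ∈ S, (p.rootMultiplicity z - 1)
        ≤ ∑ z ∈ S, h.roots.count z := by
          refine Finset.sum_le_sum ?_
          intro z hz
          rw [count_roots]
          exact hdvd z hz
      _ ≤ ∑ z ∈ S ∪ h.roots.toFinset, h.roots.count z :=
          Finset.sum_le_sum_of_subset Finset.subset_union_left
      _ = ∑ z ∈ h.roots.toFinset, h.roots.count z := by
          refine (Finset.sum_subset Finset.subset_union_right ?_).symm
          intro z _ hz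
          rw [Multiset.count_eq_zero]
          exact fun hmem => hz (Multiset.mem_toFinset.mpr hmem)
      _ = h.roots.card := Multiset.toFinset_sum_count_eq _
      _ ≤ h.natDegree := h.card_roots'
      _ ≤ k' := hhdeg
  have hone : ∀ z ∈ S, 1 ≤ p.rootMultiplicity z := by
    intro z hz
    rw [Nat.one_le_iff_ne_zero, ← Nat.pos_iff_ne_zero]
    exact (rootMultiplicity_pos hpne).mpr
      (isRoot_of_mem_roots (Multiset.mem_toFinset.mp hz))
  have hsum3 : ∑ z ∈ S, (p.rootMultiplicity z - 1) + S.card = n := by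
    rw [← hsum, Finset.card_eq_sum_ones, ← Finset.sum_add_distrib]
    refine Finset.sum_congr rfl ?_
    intro z hz
    rw [count_roots]
    have := hone z hz
    omega
  have hd : n ≤ k' + S.card := by omega
  constructor
  · have h1 : (n : ℝ) ≤ (k' : ℝ) + (S.card : ℝ) := by exact_mod_cast hd
    have h2 : (k' : ℝ) + 2 ≤ (n : ℝ) := by exact_mod_cast hkn
    push_cast
    linarith
  · omega
end

section
/- Let p be a real polynomial of degree n ≥ 2 with only real zeroes and at least two distinct zeroes. Then the rational function R(x) = p(x)p''(x)/(p'(x))² satisfies R(x) < (n−1)/n for every real x with p'(x) ≠ 0. -/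
/-!
Since all zeroes are real, `p = c ∏ᵢ (X - rᵢ)`. At a point `x` with `p x ≠ 0`, put
`S₁ = ∑ᵢ 1 / (x - rᵢ)` and `S₂ = ∑ᵢ 1 / (x - rᵢ)²`; then `p' = p S₁` and
`p'' = p (S₁² - S₂)` at `x`, so `R(x) = 1 - S₂ / S₁²`. Cauchy–Schwarz gives `S₁² ≤ n S₂`,
strictly because two distinct zeroes make the terms `1 / (x - rᵢ)` not all equal; hence
`R(x) < 1 - 1/n`. At a zero of `p`, `R(x) = 0`.
-/

open Polynomial

namespace Multiset

variable {ι R : Type*}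

theorem sum_map_sum_map_sub_sq [CommRing R] (s : Multiset ι) (f : ι → R) :
    (s.map fun i => (s.map fun j => (f i - f j) ^ 2).sum).sum
      = 2 * (card s * (s.map (f · ^ 2)).sum - (s.map f).sum ^ 2) := by
  simp only [sub_sq, sum_map_add, sum_map_sub, sum_map_mul_left, sum_map_mul_right,
    map_const', sum_replicate, nsmul_eq_mul]
  ring

theorem sq_sum_map_lt_card_mul_sum_map_sq [CommRing R] [LinearOrder R] [IsStrictOrderedRing R]
    {s : Multiset ι} {f : ι → R} {a b : ι} (ha : a ∈ s) (hb : b ∈ s) (hab : f a ≠ f b) :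
    (s.map f).sum ^ 2 < card s * (s.map (f · ^ 2)).sum := by
  have hrow : 0 < (s.map fun j => (f a - f j) ^ 2).sum := by
    simpa using sum_lt_sum (f := fun _ => 0) (fun j _ => sq_nonneg (f a - f j))
      ⟨b, hb, sq_pos_of_ne_zero (sub_ne_zero.mpr hab)⟩
  have hpos : 0 < (s.map fun i => (s.map fun j => (f i - f j) ^ 2).sum).sum := by
    simpa using sum_lt_sum (f := fun _ => 0) (g := fun i => (s.map fun j => (f i - f j) ^ 2).sum)
      (fun i _ => sum_nonneg fun _ hx => by obtain ⟨j, -, rfl⟩ := mem_map.mp hx; positivity)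
      ⟨a, ha, hrow⟩
  rw [sum_map_sum_map_sub_sq] at hpos
  linarith

end Multiset

namespace Polynomial

theorem splits_of_forall_isRoot_map_complex_im_eq_zero {p : ℝ[X]}
    (h : ∀ z : ℂ, (p.map (algebraMap ℝ ℂ)).IsRoot z → z.im = 0) : p.Splits :=
  Splits.of_splits_map_of_injective (algebraMap ℝ ℂ).injective (IsAlgClosed.splits _)
    fun z hz => ⟨z.re, Complex.ext rfl (h z (isRoot_of_mem_roots hz)).symm⟩

variable {K : Type*} [Field K]

theorem eval_derivative_multiset_prod_X_sub_C {s : Multiset K} {x : K} (hx : x ∉ s) :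
    (derivative (s.map fun z => X - C z).prod).eval x
      = (s.map fun z => X - C z).prod.eval x * (s.map fun z => 1 / (x - z)).sum := by
  have hsplit : (s.map fun z => X - C z).prod.Splits :=
    Splits.multisetProd (by simp [Splits.X_sub_C])
  have hne : (s.map fun z => X - C z).prod.eval x ≠ 0 := by
    simpa [eval_multiset_prod, Multiset.prod_eq_zero_iff, sub_eq_zero] using hx
  simpa [roots_multiset_prod_X_sub_C] using hsplit.eval_derivative_eq_eval_mul_sum hne

theorem eval_derivative_derivative_multiset_prod_X_sub_C {s : Multiset K} {x : K}
    (hx : x ∉ s) :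
    (derivative (derivative (s.map fun z => X - C z).prod)).eval x
      = (s.map fun z => X - C z).prod.eval x *
          ((s.map fun z => 1 / (x - z)).sum ^ 2 - (s.map fun z => (1 / (x - z)) ^ 2).sum) := by
  induction s using Multiset.induction_on with
  | empty => simp
  | cons a s ih =>
    obtain ⟨hxa, hxs⟩ : x ≠ a ∧ x ∉ s := by simpa [not_or] using hx
    have hxa : x - a ≠ 0 := sub_ne_zero.mpr hxa
    simp only [Multiset.map_cons, Multiset.prod_cons, Multiset.sum_cons, derivative_mul,
      derivative_sub, derivative_X, derivative_C, sub_zero, one_mul, derivative_add, eval_add,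
      eval_mul, eval_sub, eval_X, eval_C, eval_derivative_multiset_prod_X_sub_C hxs, ih hxs]
    field_simp
    ring

theorem Splits.eval_derivative_derivative_eq_eval_mul {f : K[X]} (hf : f.Splits) {x : K}
    (hx : f.eval x ≠ 0) :
    f.derivative.derivative.eval x = f.eval x * ((f.roots.map fun z => 1 / (x - z)).sum ^ 2 -
      (f.roots.map fun z => (1 / (x - z)) ^ 2).sum) := by
  have hroots : x ∉ f.roots := fun h => hx (isRoot_of_mem_roots h)
  rw [hf.eval_eq_prod_roots]
  conv_lhs => rw [hf.eq_prod_roots]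
  rw [derivative_C_mul, derivative_C_mul, eval_mul, eval_C,
    eval_derivative_derivative_multiset_prod_X_sub_C hroots]
  simp [eval_multiset_prod, mul_assoc]

theorem Splits.eval_mul_eval_derivative_derivative_div_sq {f : K[X]} (hf : f.Splits) {x : K}
    (hx : f.eval x ≠ 0) (hx' : f.derivative.eval x ≠ 0) :
    f.eval x * f.derivative.derivative.eval x / f.derivative.eval x ^ 2
      = 1 - (f.roots.map fun z => (1 / (x - z)) ^ 2).sum
          / (f.roots.map fun z => 1 / (x - z)).sum ^ 2 := by
  rw [hf.eval_derivative_eq_eval_mul_sum hx] at hx' ⊢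
  rw [hf.eval_derivative_derivative_eq_eval_mul hx]
  have hsum : (f.roots.map fun z => 1 / (x - z)).sum ≠ 0 := right_ne_zero_of_mul hx'
  field_simp

theorem Splits.eval_mul_eval_derivative_derivative_div_sq_lt {f : ℝ[X]} (hf : f.Splits) {x : ℝ}
    (hx : f.eval x ≠ 0) (hx' : f.derivative.eval x ≠ 0) {a b : ℝ} (ha : a ∈ f.roots)
    (hb : b ∈ f.roots) (hab : a ≠ b) :
    f.eval x * f.derivative.derivative.eval x / f.derivative.eval x ^ 2
      < ((f.natDegree : ℝ) - 1) / f.natDegree := by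
  set S₁ := (f.roots.map fun z => 1 / (x - z)).sum
  set S₂ := (f.roots.map fun z => (1 / (x - z)) ^ 2).sum
  have hS₁ : S₁ ≠ 0 := right_ne_zero_of_mul (hf.eval_derivative_eq_eval_mul_sum hx ▸ hx')
  have hn : (0 : ℝ) < f.natDegree := by
    rw [hf.natDegree_eq_card_roots]
    exact_mod_cast Multiset.card_pos_iff_exists_mem.mpr ⟨a, ha⟩
  have hcs : S₁ ^ 2 < f.natDegree * S₂ := by
    rw [hf.natDegree_eq_card_roots]
    exact Multiset.sq_sum_map_lt_card_mul_sum_map_sq ha hb (by simpa using hab)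
  have hS₂ : 1 / (f.natDegree : ℝ) < S₂ / S₁ ^ 2 := by
    rw [div_lt_div_iff₀ hn (by positivity)]
    linarith
  rw [hf.eval_mul_eval_derivative_derivative_div_sq hx hx', sub_div, div_self hn.ne']
  linarith

end Polynomial

/-- Let `p` be a real polynomial of degree `n ≥ 2` with only real zeroes and at
least two distinct zeroes. Then `R(x) = p(x)p''(x)/(p'(x))² < (n−1)/n` for every
real `x` with `p'(x) ≠ 0`. -/
theorem R_lt_newton_bound (p : ℝ[X]) (n : ℕ) (hn : p.natDegree = n) (hn2 : 2 ≤ n)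
    (hreal : ∀ z : ℂ, (p.map (algebraMap ℝ ℂ)).IsRoot z → z.im = 0)
    (hdist : ∃ x y : ℝ, x ≠ y ∧ p.IsRoot x ∧ p.IsRoot y) :
    ∀ x : ℝ, (derivative p).eval x ≠ 0 →
      p.eval x * (derivative (derivative p)).eval x / ((derivative p).eval x) ^ 2
        < ((n : ℝ) - 1) / n := by
  intro x hx
  rcases eq_or_ne (p.eval x) 0 with hpx | hpx
  · rw [hpx, zero_mul, zero_div]
    have : (2 : ℝ) ≤ n := by exact_mod_cast hn2
    exact div_pos (by linarith) (by linarith)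
  obtain ⟨a, b, hab, ha, hb⟩ := hdist
  have hp : p ≠ 0 := fun h => hpx (by simp [h])
  have hsplit := splits_of_forall_isRoot_map_complex_im_eq_zero hreal
  rw [← hn]
  exact hsplit.eval_mul_eval_derivative_derivative_div_sq_lt hpx hx
    ((mem_roots hp).mpr ha) ((mem_roots hp).mpr hb) hab
end

section
/- Let p be a real polynomial of degree n ≥ 2 with only real zeroes and d ≥ 2 distinct zeroes λ₁ < ⋯ < λ_d, and let μ₁ < ⋯ < μ_{d−1} be the critical points of p with p(μⱼ) ≠ 0. Then on the real line, p(x)p''(x)/(p'(x))² = (n−1)/n + Σⱼ βⱼ/(x − μⱼ)² wherever defined, where βⱼ = p(μⱼ)/p''(μⱼ) < 0. -/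
/-!
Since `p` is real-rooted, `p'/p = ∑ 1/(x - λ)` over the zeroes; differentiating at a critical
point `μ` with `p(μ) ≠ 0` gives `p''(μ)/p(μ) = -∑ 1/(μ - λ)² < 0`, so `βμ < 0` and `μ` is a
simple zero of `p'`. A zero of `p` of multiplicity `m` is a zero of `p'` of multiplicity `m - 1`,
so `p/p'` has exactly the simple poles `μ`, with residues `βμ`: it equals `L + ∑ βμ/(x - μ)`
with `L` linear of slope `1/n`. Since `(p/p')' = 1 - R`, differentiating this expansion gives `R`.
-/

open Polynomial

namespace Polynomial

section Field

variable {K : Type*} [Field K]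

theorem eval_divByMonic_X_sub_C_self (f : K[X]) (a : K) :
    (f /ₘ (X - C a)).eval a = (derivative f).eval a := by
  simpa using
    congrArg (eval a) (divByMonic_add_X_sub_C_mul_derivative_divByMonic_eq_derivative f a)

theorem pow_X_sub_C_dvd_divByMonic_of_ne {f : K[X]} {a b : K} {k : ℕ} (ha : f.IsRoot a)
    (hb : (X - C b) ^ k ∣ f) (hab : b ≠ a) : (X - C b) ^ k ∣ f /ₘ (X - C a) := by
  have hcop : IsCoprime ((X - C b) ^ k) (X - C a) :=
    (isCoprime_X_sub_C_of_isUnit_sub (sub_ne_zero.2 hab).isUnit).pow_left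
  exact hcop.dvd_of_dvd_mul_left (by rwa [mul_divByMonic_eq_iff_isRoot.2 ha])

theorem eval_sum_C_mul_divByMonic_of_mem {g : K[X]} {S : Finset K} (hS : ∀ μ ∈ S, g.IsRoot μ)
    (β : K → K) {ν : K} (hν : ν ∈ S) :
    (∑ μ ∈ S, C (β μ) * (g /ₘ (X - C μ))).eval ν = β ν * (derivative g).eval ν := by
  rw [eval_finsetSum, Finset.sum_eq_single_of_mem ν hν fun μ hμ hμν => ?_]
  · rw [eval_mul, eval_C, eval_divByMonic_X_sub_C_self]
  · have hdvd := pow_X_sub_C_dvd_divByMonic_of_ne (k := 1) (hS μ hμ)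
      (by simpa using dvd_iff_isRoot.2 (hS ν hν)) (Ne.symm hμν)
    rw [pow_one, dvd_iff_isRoot] at hdvd
    rw [eval_mul, hdvd.eq_zero, mul_zero]

theorem rootMultiplicity_eq_one_of_eval_derivative_ne_zero {f : K[X]} {a : K} (ha : f.IsRoot a)
    (ha' : (derivative f).eval a ≠ 0) : f.rootMultiplicity a = 1 := by
  have hf : f ≠ 0 := by rintro rfl; simp at ha'
  have hpos := (rootMultiplicity_pos hf).2 ha
  have hle : ¬ 1 < f.rootMultiplicity a :=
    fun h => ha' ((one_lt_rootMultiplicity_iff_isRoot hf).1 h).2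
  omega

/-- `hfL` says `f/f' = L + ∑ βμ/(X - μ)`; the conclusion is its derivative, since
`(f/f')' = 1 - f f''/f'²`. -/
theorem eval_mul_eval_derivative_derivative_div_sq {f L : K[X]} {c : K} {S : Finset K}
    (β : K → K) (hS : ∀ μ ∈ S, (derivative f).IsRoot μ)
    (hfL : f = L * derivative f + ∑ μ ∈ S, C (β μ) * (derivative f /ₘ (X - C μ)))
    (hL : derivative L = C c) {x : K} (hx : (derivative f).eval x ≠ 0) :
    f.eval x * (derivative (derivative f)).eval x / (derivative f).eval x ^ 2
      = 1 - c + ∑ μ ∈ S, β μ / (x - μ) ^ 2 := by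
  have hxμ : ∀ μ ∈ S, x - μ ≠ 0 := fun μ hμ h => hx (sub_eq_zero.1 h ▸ hS μ hμ)
  have hq : ∀ μ ∈ S, (derivative f /ₘ (X - C μ)).eval x = (derivative f).eval x / (x - μ) := by
    intro μ hμ
    rw [eq_div_iff (hxμ μ hμ), mul_comm]
    simpa using congrArg (eval x) (mul_divByMonic_eq_iff_isRoot.2 (hS μ hμ))
  have hq' : ∀ μ ∈ S, (derivative (derivative f /ₘ (X - C μ))).eval x
      = (derivative (derivative f)).eval x / (x - μ) - (derivative f).eval x / (x - μ) ^ 2 := by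
    intro μ hμ
    have h := congrArg (eval x)
      (divByMonic_add_X_sub_C_mul_derivative_divByMonic_eq_derivative (derivative f) μ)
    rw [eval_add, eval_mul, eval_sub, eval_X, eval_C, hq μ hμ] at h
    field_simp [hxμ μ hμ] at h ⊢
    linear_combination h
  have hsum : ∑ μ ∈ S, β μ * (derivative f /ₘ (X - C μ)).eval x
      = (derivative f).eval x * ∑ μ ∈ S, β μ / (x - μ) := by
    rw [Finset.mul_sum]
    exact Finset.sum_congr rfl fun μ hμ => by rw [hq μ hμ]; ring
  have hsum' : ∑ μ ∈ S, β μ * (derivative (derivative f /ₘ (X - C μ))).eval x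
      = (derivative (derivative f)).eval x * ∑ μ ∈ S, β μ / (x - μ)
        - (derivative f).eval x * ∑ μ ∈ S, β μ / (x - μ) ^ 2 := by
    rw [Finset.mul_sum, Finset.mul_sum, ← Finset.sum_sub_distrib]
    exact Finset.sum_congr rfl fun μ hμ => by rw [hq' μ hμ]; ring
  have h0 := congrArg (eval x) hfL
  have h1 := congrArg (eval x) (congrArg derivative hfL)
  simp only [derivative_add, derivative_mul, derivative_sum, derivative_C, zero_mul, zero_add,
    hL, eval_add, eval_mul, eval_C, eval_finsetSum, hsum, hsum'] at h0 h1
  rw [div_eq_iff (pow_ne_zero 2 hx)]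
  linear_combination (derivative (derivative f)).eval x * h0 - (derivative f).eval x * h1

variable [CharZero K]

theorem pow_rootMultiplicity_derivative_dvd {f : K[X]} {a : K} (ha : f.IsRoot a) :
    (X - C a) ^ (derivative f).rootMultiplicity a ∣ f := by
  rw [derivative_rootMultiplicity_of_root ha]
  exact (pow_dvd_pow _ (Nat.sub_le _ 1)).trans (pow_rootMultiplicity_dvd f a)

/-- The poles of `f/f'` are the simple zeroes `μ` of `f'` outside the zeroes of `f`, with residues
`f(μ)/f''(μ)`. -/
theorem derivative_dvd_sub_sum_C_mul_divByMonic {f : K[X]} (hf' : (derivative f).Splits)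
    (hf'0 : derivative f ≠ 0) {S : Finset K}
    (hS : ∀ μ, μ ∈ S ↔ μ ∈ (derivative f).roots ∧ f.eval μ ≠ 0)
    (hsimple : ∀ μ ∈ S, (derivative (derivative f)).eval μ ≠ 0) :
    derivative f ∣ f - ∑ μ ∈ S, C (f.eval μ / (derivative (derivative f)).eval μ) *
      (derivative f /ₘ (X - C μ)) := by
  classical
  set β := fun μ => f.eval μ / (derivative (derivative f)).eval μ
  have hroot : ∀ μ ∈ S, (derivative f).IsRoot μ :=
    fun μ hμ => isRoot_of_mem_roots ((hS μ).1 hμ).1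
  by_cases hF : f - ∑ μ ∈ S, C (β μ) * (derivative f /ₘ (X - C μ)) = 0
  · rw [hF]
    exact dvd_zero _
  refine hf'.dvd_of_roots_le_roots hf'0 (Multiset.le_iff_count.2 fun ν => ?_)
  rw [count_roots, count_roots, le_rootMultiplicity_iff hF]
  by_cases hν : (derivative f).IsRoot ν
  swap
  · simp [rootMultiplicity_eq_zero hν]
  by_cases hfν : f.IsRoot ν
  · refine dvd_sub (pow_rootMultiplicity_derivative_dvd hfν)
      (Finset.dvd_sum fun μ hμ => dvd_mul_of_dvd_right ?_ _)
    refine pow_X_sub_C_dvd_divByMonic_of_ne (hroot μ hμ) (pow_rootMultiplicity_dvd _ _) ?_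
    rintro rfl
    exact ((hS ν).1 hμ).2 hfν
  · have hνS : ν ∈ S := (hS ν).2 ⟨(mem_roots hf'0).2 hν, hfν⟩
    rw [rootMultiplicity_eq_one_of_eval_derivative_ne_zero hν (hsimple ν hνS), pow_one,
      dvd_iff_isRoot, IsRoot, eval_sub, eval_sum_C_mul_divByMonic_of_mem hroot β hνS,
      div_mul_cancel₀ _ (hsimple ν hνS), sub_self]

theorem natDegree_sum_C_mul_derivative_divByMonic_lt {f : K[X]} (hf : f.natDegree ≠ 0)
    (S : Finset K) (β : K → K) :
    (∑ μ ∈ S, C (β μ) * (derivative f /ₘ (X - C μ))).natDegree < f.natDegree := by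
  refine (natDegree_sum_le_of_forall_le _ _ fun μ _ => (natDegree_C_mul_le _ _).trans ?_).trans_lt
    (show f.natDegree - 1 - 1 < f.natDegree by omega)
  rw [natDegree_divByMonic _ (monic_X_sub_C μ), natDegree_derivative, natDegree_X_sub_C]

theorem derivative_eq_C_inv_natDegree_of_mul_derivative_eq_sub {f L G : K[X]}
    (hf : f.natDegree ≠ 0) (hG : G.natDegree < f.natDegree) (hL : L * derivative f = f - G) :
    derivative L = C (f.natDegree : K)⁻¹ := by
  have hlc0 : f.leadingCoeff ≠ 0 := leadingCoeff_ne_zero.2 (by rintro rfl; simp at hf)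
  have hfG : (f - G).natDegree = f.natDegree := natDegree_sub_eq_left_of_natDegree_lt hG
  have hL0 : L ≠ 0 := by
    rintro rfl
    rw [← hL, zero_mul, natDegree_zero] at hfG
    exact hf hfG.symm
  have hdegL : L.natDegree = 1 := by
    have h := congrArg natDegree hL
    rw [natDegree_mul hL0 (derivative_ne_zero.2 hf), natDegree_derivative, hfG] at h
    omega
  have hlcL : L.leadingCoeff * (f.leadingCoeff * f.natDegree) = f.leadingCoeff := by
    have h := congrArg leadingCoeff hL
    rwa [leadingCoeff_mul, leadingCoeff_derivative,
      leadingCoeff_sub_of_degree_lt (degree_lt_degree hG)] at h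
  rw [eq_X_add_C_of_natDegree_le_one hdegL.le]
  simp only [derivative_add, derivative_C_mul_X, derivative_C, add_zero]
  rw [← hdegL, ← leadingCoeff]
  exact congrArg C (eq_inv_of_mul_eq_one_left (mul_left_cancel₀ hlc0 (by linear_combination hlcL)))

end Field

theorem hasDerivAt_multiset_sum_one_div_sub {𝕜 : Type*} [NontriviallyNormedField 𝕜]
    {M : Multiset 𝕜} {x : 𝕜} (hx : x ∉ M) :
    HasDerivAt (fun y => (M.map fun r => 1 / (y - r)).sum)
      (-(M.map fun r => 1 / (x - r) ^ 2).sum) x := by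
  induction M using Multiset.induction_on with
  | empty => simpa using hasDerivAt_const x (0 : 𝕜)
  | cons r M ih =>
    rw [Multiset.mem_cons, not_or] at hx
    simp only [Multiset.map_cons, Multiset.sum_cons, neg_add]
    refine HasDerivAt.add ?_ (ih hx.2)
    simpa [one_div, neg_div] using ((hasDerivAt_id' x).sub_const r).fun_inv (sub_ne_zero.2 hx.1)

theorem Splits.derivative_splits {p : ℝ[X]} (hp : p.Splits) : (derivative p).Splits := by
  rw [splits_iff_card_roots] at hp ⊢
  have := card_roots_le_derivative p
  have := card_roots' (derivative p)
  rw [natDegree_derivative] at *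
  omega

theorem Splits.eval_div_eval_derivative_derivative_neg {p : ℝ[X]} (hp : p.Splits)
    (hdeg : p.natDegree ≠ 0) {μ : ℝ} (hμ : p.eval μ ≠ 0) (hμ' : (derivative p).IsRoot μ) :
    p.eval μ / (derivative (derivative p)).eval μ < 0 := by
  have hμr : μ ∉ p.roots := fun h => hμ (isRoot_of_mem_roots h)
  have hlog : (fun y => (derivative p).eval y) =ᶠ[nhds μ]
      fun y => p.eval y * (p.roots.map fun r => 1 / (y - r)).sum := by
    filter_upwards [p.continuous.continuousAt.eventually_ne hμ] with y hy
    exact hp.eval_derivative_eq_eval_mul_sum hy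
  have hsecond : (derivative (derivative p)).eval μ
      = -(p.eval μ * (p.roots.map fun r => 1 / (μ - r) ^ 2).sum) := by
    have h := ((p.hasDerivAt μ).mul (hasDerivAt_multiset_sum_one_div_sub hμr)).congr_of_eventuallyEq
      hlog
    rw [(derivative p).hasDerivAt μ |>.unique h, hμ'.eq_zero]
    ring
  have hpos : 0 < (p.roots.map fun r => 1 / (μ - r) ^ 2).sum := by
    obtain ⟨r, hr⟩ := Multiset.exists_mem_of_ne_zero (hp.roots_ne_zero hdeg)
    have hr' : μ - r ≠ 0 := sub_ne_zero.2 fun h => hμr (h ▸ hr)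
    refine lt_of_lt_of_le (by positivity) (Multiset.single_le_sum (fun _ h => ?_) _
      (Multiset.mem_map_of_mem _ hr))
    obtain ⟨s, -, rfl⟩ := Multiset.mem_map.1 h
    positivity
  rw [hsecond, div_neg, neg_lt_zero, div_mul_eq_div_div, div_self hμ]
  positivity

end Polynomial

open scoped Classical in
theorem R_partial_fractions_general (p : ℝ[X]) (n : ℕ) (hn : p.natDegree = n)
    (hreal : ∀ z : ℂ, (p.map (algebraMap ℝ ℂ)).IsRoot z → z.im = 0)
    (S : Finset ℝ)
    (hS : S = (derivative p).roots.toFinset.filter (fun μ => p.eval μ ≠ 0)) :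
    (∀ μ ∈ S, p.eval μ / (derivative (derivative p)).eval μ < 0) ∧
    (∀ x : ℝ, (derivative p).eval x ≠ 0 →
      p.eval x * (derivative (derivative p)).eval x / ((derivative p).eval x) ^ 2
        = ((n : ℝ) - 1) / n
          + ∑ μ ∈ S, (p.eval μ / (derivative (derivative p)).eval μ) / (x - μ) ^ 2) := by
  have hp : p.Splits := splits_of_forall_isRoot_map_complex_im_eq_zero hreal
  have hmem : ∀ μ, μ ∈ S ↔ μ ∈ (derivative p).roots ∧ p.eval μ ≠ 0 := by simp [hS]
  have hneg : ∀ μ ∈ S, p.eval μ / (derivative (derivative p)).eval μ < 0 := fun μ hμ => by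
    obtain ⟨hroot, hpμ⟩ := (hmem μ).1 hμ
    exact hp.eval_div_eval_derivative_derivative_neg
      (derivative_ne_zero.1 (ne_zero_of_mem_roots hroot)) hpμ (isRoot_of_mem_roots hroot)
  refine ⟨hneg, fun x hx => ?_⟩
  have hp' : derivative p ≠ 0 := fun h => hx (by rw [h, eval_zero])
  have hdeg : p.natDegree ≠ 0 := derivative_ne_zero.1 hp'
  obtain ⟨L, hL⟩ := derivative_dvd_sub_sum_C_mul_divByMonic hp.derivative_splits hp' hmem
    fun μ hμ h => (hneg μ hμ).ne (by rw [h, div_zero])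
  have hLderiv := derivative_eq_C_inv_natDegree_of_mul_derivative_eq_sub hdeg
    (natDegree_sum_C_mul_derivative_divByMonic_lt hdeg _ _) (by rw [mul_comm, hL])
  rw [eval_mul_eval_derivative_derivative_div_sq _
    (fun μ hμ => isRoot_of_mem_roots ((hmem μ).1 hμ).1)
    (by rw [mul_comm, ← hL, sub_add_cancel]) hLderiv hx, hn]
  have hn0 : (n : ℝ) ≠ 0 := by rw [← hn]; exact_mod_cast hdeg
  field_simp

open scoped Classical in
/-- **Partial fraction expansion of `R`.** Let `p` be real-rooted of degree `n ≥ 2`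
with at least two distinct zeroes, and let `S` be the set of critical points `μ` of
`p` with `p(μ) ≠ 0`. Then for every `x` with `p'(x) ≠ 0`,
`p(x)p''(x)/(p'(x))² = (n−1)/n + Σ_{μ ∈ S} β_μ/(x − μ)²` with
`β_μ = p(μ)/p''(μ) < 0`. -/
theorem R_partial_fractions (p : ℝ[X]) (n : ℕ) (hn : p.natDegree = n) (hn2 : 2 ≤ n)
    (hreal : ∀ z : ℂ, (p.map (algebraMap ℝ ℂ)).IsRoot z → z.im = 0)
    (hdist : ∃ x y : ℝ, x ≠ y ∧ p.IsRoot x ∧ p.IsRoot y)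
    (S : Finset ℝ)
    (hS : S = (derivative p).roots.toFinset.filter (fun μ => p.eval μ ≠ 0)) :
    (∀ μ ∈ S, p.eval μ / (derivative (derivative p)).eval μ < 0) ∧
    (∀ x : ℝ, (derivative p).eval x ≠ 0 →
      p.eval x * (derivative (derivative p)).eval x / ((derivative p).eval x) ^ 2
        = ((n : ℝ) - 1) / n
          + ∑ μ ∈ S, (p.eval μ / (derivative (derivative p)).eval μ) / (x - μ) ^ 2) :=
  R_partial_fractions_general p n hn hreal S hS
end

section
/- Let p be a real polynomial of degree n with only real zeroes and d ≥ 2 distinct zeroes, and let κ ≥ (n−1)/n be real. Then the polynomial F_κ[p] = p·p'' − κ(p')² has no real zeroes other than multiple zeroes of p; equivalently, Q_κ[p](x) = (p(x)p''(x) − κ(p'(x))²)/p(x)² < 0 for every real x with p(x) ≠ 0. -/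
/-!
At a point `x` with `p x ≠ 0`, write `S₁ = ∑ 1/(x - r)` and `S₂ = ∑ 1/(x - r)²` over the roots of
`p` counted with multiplicity. Since `F₁[fg] = g² F₁[f] + f² F₁[g]` and `F₁[X - a] = -1`, one gets
`p'(x) = p(x) S₁` and `F₁[p](x) = -p(x)² S₂`, hence `F_κ[p](x) = p(x)² ((1 - κ) S₁² - S₂)`.
Cauchy–Schwarz gives `S₁² ≤ n S₂`, strictly because two distinct roots make the numbers
`1/(x - r)` not all equal, and `1 - κ ≤ 1/n` then forces `F_κ[p](x) < 0`.
-/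

open Polynomial

namespace Polynomial

section CommRing

variable {R : Type*} [CommRing R]

noncomputable def Fκ (κ : R) (p : R[X]) : R[X] :=
  p * derivative (derivative p) - C κ * derivative p ^ 2

theorem eval_Fκ (κ : R) (p : R[X]) (x : R) :
    (Fκ κ p).eval x = p.eval x * (derivative (derivative p)).eval x
      - κ * (derivative p).eval x ^ 2 := by
  simp [Fκ]

theorem Fκ_eq_Fκ_one_add (κ : R) (p : R[X]) :
    Fκ κ p = Fκ 1 p + C (1 - κ) * derivative p ^ 2 := by
  simp only [Fκ, C_sub, C_1]
  ring

theorem Fκ_one_mul (f g : R[X]) : Fκ 1 (f * g) = g ^ 2 * Fκ 1 f + f ^ 2 * Fκ 1 g := by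
  simp only [Fκ, derivative_mul, derivative_add, C_1]
  ring

theorem Fκ_one_C (c : R) : Fκ 1 (C c) = 0 := by
  simp [Fκ]

theorem Fκ_one_X_sub_C (a : R) : Fκ 1 (X - C a) = -1 := by
  simp [Fκ]

end CommRing

section Field

variable {K : Type*} [Field K]

theorem eval_Fκ_one_multiset_prod_X_sub_C {x : K} (s : Multiset K) (hx : x ∉ s) :
    (Fκ 1 (s.map (X - C ·)).prod).eval x
      = -((s.map (X - C ·)).prod.eval x ^ 2 * (s.map fun z ↦ (1 / (x - z)) ^ 2).sum) := by
  induction s using Multiset.induction_on with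
  | empty => simp [Fκ]
  | cons a s ih =>
    have hxa : x - a ≠ 0 := sub_ne_zero.mpr fun h ↦ hx (h ▸ Multiset.mem_cons_self x s)
    have ih := ih fun h ↦ hx (Multiset.mem_cons_of_mem h)
    simp only [Multiset.map_cons, Multiset.prod_cons, Multiset.sum_cons, Fκ_one_mul,
      Fκ_one_X_sub_C, eval_add, eval_mul, eval_pow, eval_neg, eval_one, eval_sub, eval_X,
      eval_C, ih]
    field_simp
    ring

theorem Splits.eval_Fκ_one {f : K[X]} (hf : f.Splits) {x : K} (hx : f.eval x ≠ 0) :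
    (Fκ 1 f).eval x = -(f.eval x ^ 2 * (f.roots.map fun z ↦ (1 / (x - z)) ^ 2).sum) := by
  have hxs : x ∉ f.roots := fun h ↦ hx (isRoot_of_mem_roots h)
  set P := (f.roots.map (X - C ·)).prod
  have hfP : f = C f.leadingCoeff * P := hf.eq_prod_roots
  have hP : f.eval x = f.leadingCoeff * P.eval x := by
    conv_lhs => rw [hfP]
    rw [eval_mul, eval_C]
  conv_lhs => rw [hfP]
  rw [hP, Fκ_one_mul, Fκ_one_C, eval_add, eval_mul, eval_mul, eval_pow, eval_pow, eval_C,
    eval_zero, eval_Fκ_one_multiset_prod_X_sub_C _ hxs]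
  ring

theorem Splits.eval_Fκ {f : K[X]} (hf : f.Splits) {x : K} (hx : f.eval x ≠ 0) (κ : K) :
    (Fκ κ f).eval x = f.eval x ^ 2 * ((1 - κ) * (f.roots.map fun z ↦ 1 / (x - z)).sum ^ 2
      - (f.roots.map fun z ↦ (1 / (x - z)) ^ 2).sum) := by
  rw [Fκ_eq_Fκ_one_add, eval_add, hf.eval_Fκ_one hx, eval_mul, eval_pow, eval_C,
    hf.eval_derivative_eq_eval_mul_sum hx]
  ring

end Field

end Polynomial

section CauchySchwarz

open Finset

variable {α : Type*} [Field α] [LinearOrder α] [IsStrictOrderedRing α]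

theorem Finset.sq_sum_lt_card_mul_sum_sq {ι : Type*} {s : Finset ι} {f : ι → α}
    (h : ∃ i ∈ s, ∃ j ∈ s, f i ≠ f j) :
    (∑ i ∈ s, f i) ^ 2 < #s * ∑ i ∈ s, f i ^ 2 := by
  obtain ⟨i, hi, j, hj, hij⟩ := h
  have lagrange : 2 * (#s * ∑ i ∈ s, f i ^ 2 - (∑ i ∈ s, f i) ^ 2)
      = ∑ a ∈ s, ∑ b ∈ s, (f a - f b) ^ 2 := by
    simp only [sub_sq, Finset.sum_add_distrib, Finset.sum_sub_distrib, Finset.sum_const,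
      nsmul_eq_mul, ← Finset.mul_sum, ← Finset.sum_mul]
    ring
  have hpos : 0 < ∑ a ∈ s, ∑ b ∈ s, (f a - f b) ^ 2 := by
    refine Finset.sum_pos' (fun a _ ↦ Finset.sum_nonneg fun b _ ↦ sq_nonneg _) ⟨i, hi, ?_⟩
    refine Finset.sum_pos' (fun b _ ↦ sq_nonneg _) ⟨j, hj, ?_⟩
    exact sq_pos_of_ne_zero (sub_ne_zero.mpr hij)
  linarith

theorem Multiset.sq_sum_lt_card_mul_sum_sq {t : Multiset α} (h : ∃ a ∈ t, ∃ b ∈ t, a ≠ b) :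
    t.sum ^ 2 < card t * (t.map (· ^ 2)).sum := by
  obtain ⟨a, ha, b, hb, hab⟩ := h
  have key := Finset.sq_sum_lt_card_mul_sum_sq (s := (Finset.univ : Finset t))
    (f := fun x ↦ (x : α))
    ⟨⟨a, 0, Multiset.count_pos.mpr ha⟩, Finset.mem_univ _,
      ⟨b, 0, Multiset.count_pos.mpr hb⟩, Finset.mem_univ _, hab⟩
  rwa [Finset.sum_eq_multiset_sum, Finset.sum_eq_multiset_sum, Multiset.map_univ_coe,
    Multiset.map_univ t (· ^ 2), Finset.card_univ, Multiset.card_coe] at key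

end CauchySchwarz

namespace Polynomial

theorem Splits.eval_Fκ_neg {p : ℝ[X]} (hp : p.Splits)
    (hdist : ∃ a b : ℝ, a ≠ b ∧ p.IsRoot a ∧ p.IsRoot b) {κ : ℝ}
    (hκ : ((p.natDegree : ℝ) - 1) / p.natDegree ≤ κ) {x : ℝ} (hx : p.eval x ≠ 0) :
    (Fκ κ p).eval x < 0 := by
  have hp0 : p ≠ 0 := by rintro rfl; simp at hx
  obtain ⟨a, b, hab, ha, hb⟩ := hdist
  rw [hp.eval_Fκ hx]
  refine mul_neg_of_pos_of_neg (by positivity) ?_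
  set t := p.roots.map fun z ↦ 1 / (x - z)
  have hat : 1 / (x - a) ∈ t := Multiset.mem_map_of_mem _ ((mem_roots hp0).mpr ha)
  have hbt : 1 / (x - b) ∈ t := Multiset.mem_map_of_mem _ ((mem_roots hp0).mpr hb)
  have hcard : p.natDegree = Multiset.card t := by
    rw [hp.natDegree_eq_card_roots, Multiset.card_map]
  have hdeg_pos : (0 : ℝ) < p.natDegree := by
    rw [hcard]
    exact_mod_cast Multiset.card_pos_iff_exists_mem.mpr ⟨_, hat⟩
  have hCS : t.sum ^ 2 < p.natDegree * (t.map (· ^ 2)).sum := by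
    rw [hcard]
    refine Multiset.sq_sum_lt_card_mul_sum_sq ⟨_, hat, _, hbt, ?_⟩
    simpa using hab
  have hsq : (t.map (· ^ 2)).sum = (p.roots.map fun z ↦ (1 / (x - z)) ^ 2).sum := by
    rw [Multiset.map_map]
    rfl
  rw [div_le_iff₀ hdeg_pos] at hκ
  rw [← hsq]
  nlinarith [mul_le_mul_of_nonneg_right hκ (sq_nonneg t.sum)]

end Polynomial

theorem Q_kappa_neg_of_kappa_ge_general (p : ℝ[X]) (n : ℕ) (hn : p.natDegree = n)
    (hreal : ∀ z : ℂ, (p.map (algebraMap ℝ ℂ)).IsRoot z → z.im = 0)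
    (hdist : ∃ x y : ℝ, x ≠ y ∧ p.IsRoot x ∧ p.IsRoot y)
    (κ : ℝ) (hκ : ((n : ℝ) - 1) / n ≤ κ) :
    (∀ x : ℝ,
        (p * derivative (derivative p) - C κ * (derivative p) ^ 2).eval x = 0 →
        p.eval x = 0) ∧
    (∀ x : ℝ, p.eval x ≠ 0 →
      (p.eval x * (derivative (derivative p)).eval x - κ * ((derivative p).eval x) ^ 2)
        / (p.eval x) ^ 2 < 0) := by
  subst hn
  have hneg : ∀ x, p.eval x ≠ 0 → (Fκ κ p).eval x < 0 := fun x hx ↦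
    (splits_of_forall_isRoot_map_complex_im_eq_zero hreal).eval_Fκ_neg hdist hκ hx
  refine ⟨fun x hF ↦ by_contra fun hx ↦ (hneg x hx).ne hF, fun x hx ↦ ?_⟩
  rw [← eval_Fκ]
  exact div_neg_of_neg_of_pos (hneg x hx) (by positivity)

/-- Let `p` be a real-rooted polynomial of degree `n ≥ 2` with at least two
distinct zeroes and `κ ≥ (n−1)/n`. Then `F_κ[p] = p·p'' − κ(p')²` has no real
zeroes other than zeroes of `p`; equivalently
`Q_κ[p](x) = (p(x)p''(x) − κ(p'(x))²)/p(x)² < 0` whenever `p(x) ≠ 0`. -/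
theorem Q_kappa_neg_of_kappa_ge (p : ℝ[X]) (n : ℕ) (hn : p.natDegree = n) (hn2 : 2 ≤ n)
    (hreal : ∀ z : ℂ, (p.map (algebraMap ℝ ℂ)).IsRoot z → z.im = 0)
    (hdist : ∃ x y : ℝ, x ≠ y ∧ p.IsRoot x ∧ p.IsRoot y)
    (κ : ℝ) (hκ : ((n : ℝ) - 1) / n ≤ κ) :
    (∀ x : ℝ,
        (p * derivative (derivative p) - C κ * (derivative p) ^ 2).eval x = 0 →
        p.eval x = 0) ∧
    (∀ x : ℝ, p.eval x ≠ 0 →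
      (p.eval x * (derivative (derivative p)).eval x - κ * ((derivative p).eval x) ^ 2)
        / (p.eval x) ^ 2 < 0) :=
  Q_kappa_neg_of_kappa_ge_general p n hn hreal hdist κ hκ
end

section
/- For the quartic p(z) = (z² + a²)(z + a²)(z − 1) with a ∈ ℝ, a ∉ {−1, 0, 1}, the rational function Q_{3/4}[p] = (p·p'' − (3/4)(p')²)/p² has exactly four real zeroes counted with multiplicity, namely a double zero at a(a+1)/(a−1) and a double zero at −a(a−1)/(a+1); in particular the number of real zeroes of Q_{3/4}[p] (= 4) exceeds the number of non-real zeroes of p (= 2), disproving Shapiro's conjecture. -/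
open Polynomial

open scoped Classical in
/-- **Counterexample to Shapiro's conjecture.** For
`p(z) = (z² + a²)(z + a²)(z − 1)` with `a ∈ ℝ \ {−1, 0, 1}` (so `n = 4`), the
numerator `F = p·p'' − (3/4)(p')²` of `Q_{3/4}[p]` factors as
`−(3/4)(a²−1)²·(z − a(a+1)/(a−1))²·(z + a(a−1)/(a+1))²`; in particular `Q_{3/4}[p]`
has exactly 4 real zeroes with multiplicity, which exceeds the number 2 of
non-real zeroes of `p`. -/
theorem shapiro_counterexample (a : ℝ) (ha0 : a ≠ 0) (ha1 : a ≠ 1) (ham1 : a ≠ -1)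
    (p : ℝ[X]) (hp : p = (X ^ 2 + C (a ^ 2)) * (X + C (a ^ 2)) * (X - 1)) :
    (p * derivative (derivative p) - C (3 / 4) * (derivative p) ^ 2
      = C (-(3 / 4) * (a ^ 2 - 1) ^ 2)
          * (X - C (a * (a + 1) / (a - 1))) ^ 2
          * (X + C (a * (a - 1) / (a + 1))) ^ 2) ∧
    Multiset.card
      ((p * derivative (derivative p) - C (3 / 4) * (derivative p) ^ 2).roots.filter
        (fun x => p.eval x ≠ 0)) = 4 ∧
    Multiset.card
      ((p.map (algebraMap ℝ ℂ)).roots.filter (fun z => z.im ≠ 0)) = 2 ∧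
    (2 : ℕ) < 4 := by
  have hm1 : a - 1 ≠ 0 := sub_ne_zero.mpr ha1
  have hp1 : a + 1 ≠ 0 := by intro h; apply ham1; linarith
  -- Part 1: the factorization
  have hfac : p * derivative (derivative p) - C (3 / 4) * (derivative p) ^ 2
      = C (-(3 / 4) * (a ^ 2 - 1) ^ 2)
          * (X - C (a * (a + 1) / (a - 1))) ^ 2
          * (X + C (a * (a - 1) / (a + 1))) ^ 2 := by
    rw [hp]
    apply Polynomial.funext
    intro x
    simp only [derivative_mul, derivative_add, derivative_sub, derivative_X_pow, derivative_X,
      derivative_C, derivative_one, derivative_zero]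
    simp only [eval_mul, eval_add, eval_sub, eval_pow, eval_X, eval_C, eval_one, eval_zero,
      eval_natCast, Nat.cast_ofNat, Nat.cast_one]
    field_simp
    ring
  refine ⟨hfac, ?_, ?_, by norm_num⟩
  -- Part 2: four real zeroes of Q_{3/4}[p]
  · set b := a * (a + 1) / (a - 1) with hb
    set c := a * (a - 1) / (a + 1) with hc
    have hk : -(3 / 4 : ℝ) * (a ^ 2 - 1) ^ 2 ≠ 0 := by
      have : a ^ 2 - 1 ≠ 0 := by
        intro h
        have : (a - 1) * (a + 1) = 0 := by ring_nf; linarith [h]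
        rcases mul_eq_zero.mp this with h' | h' <;> [exact hm1 h'; exact hp1 h']
      positivity
    have hF : p * derivative (derivative p) - C (3 / 4) * (derivative p) ^ 2
        = C (-(3 / 4) * (a ^ 2 - 1) ^ 2) * ((X - C b) ^ 2 * (X - C (-c)) ^ 2) := by
      rw [hfac]; rw [map_neg]; ring
    rw [hF, roots_C_mul _ hk,
      roots_mul (mul_ne_zero (pow_ne_zero _ (X_sub_C_ne_zero _))
        (pow_ne_zero _ (X_sub_C_ne_zero _))),
      roots_pow, roots_pow, roots_X_sub_C, roots_X_sub_C]
    have hpb : p.eval b ≠ 0 := by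
      rw [hp]
      simp only [eval_mul, eval_add, eval_sub, eval_pow, eval_X, eval_C, eval_one]
      refine mul_ne_zero (mul_ne_zero ?_ ?_) ?_
      · positivity
      · intro h
        rw [hb] at h
        field_simp at h
        have h2 : a * (a ^ 2 + 1) = 0 := by nlinarith [h]
        rcases mul_eq_zero.mp h2 with h' | h'
        · exact ha0 h'
        · nlinarith [sq_nonneg a]
      · intro h
        rw [hb] at h
        field_simp at h
        nlinarith [sq_nonneg a]
    have hpc : p.eval (-c) ≠ 0 := by
      rw [hp]
      simp only [eval_mul, eval_add, eval_sub, eval_pow, eval_X, eval_C, eval_one]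
      refine mul_ne_zero (mul_ne_zero ?_ ?_) ?_
      · positivity
      · intro h
        rw [hc] at h
        field_simp at h
        have h2 : a * (a ^ 2 + 1) = 0 := by nlinarith [h]
        rcases mul_eq_zero.mp h2 with h' | h'
        · exact ha0 h'
        · nlinarith [sq_nonneg a]
      · intro h
        rw [hc] at h
        field_simp at h
        nlinarith [sq_nonneg a]
    rw [Multiset.filter_eq_self.mpr]
    · simp
    · intro x hx
      simp only [Multiset.mem_add, Multiset.mem_nsmul, Multiset.mem_singleton] at hx
      rcases hx with hx | hx
      · rcases hx with ⟨-, rfl⟩; exact hpb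
      · rcases hx with ⟨-, rfl⟩; exact hpc
  -- Part 3: two non-real zeroes of p
  · have hq : p.map (algebraMap ℝ ℂ) =
        (X - Polynomial.C ((a : ℂ) * Complex.I)) *
          ((X - Polynomial.C (-((a : ℂ) * Complex.I))) *
            ((X - Polynomial.C (-((a : ℂ) ^ 2))) * (X - Polynomial.C 1))) := by
      rw [hp]
      apply Polynomial.funext
      intro z
      simp only [Polynomial.map_mul, Polynomial.map_add, Polynomial.map_sub, Polynomial.map_pow,
        Polynomial.map_X, Polynomial.map_C, Polynomial.map_one, eval_mul, eval_add, eval_sub,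
        eval_pow, eval_X, eval_C, eval_one]
      have : (algebraMap ℝ ℂ) (a ^ 2) = (a : ℂ) ^ 2 := by
        simp [Complex.coe_algebraMap]
      rw [this]
      linear_combination ((z + (a : ℂ) ^ 2) * (z - 1) * (a : ℂ) ^ 2) * Complex.I_sq
    rw [hq]
    have h1 : (X - Polynomial.C ((a : ℂ) * Complex.I)) ≠ 0 := X_sub_C_ne_zero _
    have h2 : (X - Polynomial.C (-((a : ℂ) * Complex.I))) ≠ 0 := X_sub_C_ne_zero _
    have h3 : (X - Polynomial.C (-((a : ℂ) ^ 2))) ≠ 0 := X_sub_C_ne_zero _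
    have h4 : (X - Polynomial.C (1 : ℂ)) ≠ 0 := X_sub_C_ne_zero _
    rw [roots_mul (mul_ne_zero h1 (mul_ne_zero h2 (mul_ne_zero h3 h4))),
      roots_mul (mul_ne_zero h2 (mul_ne_zero h3 h4)),
      roots_mul (mul_ne_zero h3 h4), roots_X_sub_C, roots_X_sub_C, roots_X_sub_C, roots_X_sub_C]
    simp [Multiset.filter_singleton, Multiset.filter_cons, Complex.neg_im, Complex.mul_I_im,
      Complex.ofReal_im, Complex.one_im, Complex.ofReal_eq_zero, ha0, pow_eq_zero_iff,
      ← Complex.ofReal_pow]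
end
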